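/- Let n ∈ ℕ, let Φ : ℝ^n → ℝ be twice continuously differentiable and bounded below, and let α, β > 0. Let x : ℝ → ℝ^n be twice differentiable and satisfy, for all t ≥ 0, x''(t) + α·x'(t) + β·(D(∇Φ)(x(t)))(x'(t)) + ∇Φ(x(t)) = 0. Then t ↦ ‖x'(t)‖² and t ↦ ‖∇Φ(x(t))‖² are integrable on [0,∞); that is, ∫₀^∞ ‖x'(t)‖² dt < ∞ and ∫₀^∞ ‖∇Φ(x(t))‖² dt < ∞. -/

import Mathlib

/-!
Along a trajectory of (DIN) the energy
`W = (αβ + 1) Φ(x) + ‖x' + β ∇Φ(x)‖² / 2` satisfies `W' = -(α ‖x'‖² + β ‖∇Φ(x)‖²)`: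
the Hessian terms cancel because `x' + β ∇Φ(x)` has derivative `-(α x' + ∇Φ(x))` by the equation.
Since `W` is bounded below, the integral of the dissipation over `[0, T]` is bounded by
`W 0 - inf W` uniformly in `T`.
-/

open Filter MeasureTheory Set

theorem integrableOn_Ici_of_hasDerivAt_neg_of_bddBelow {W F : ℝ → ℝ} {a m : ℝ}
    (hW : ∀ t ∈ Ici a, HasDerivAt W (-F t) t) (hF : ∀ t ∈ Ici a, 0 ≤ F t)
    (hm : ∀ t ∈ Ici a, m ≤ W t) : IntegrableOn F (Ici a) := by
  have hFint : ∀ T, IntegrableOn F (Ioc a T) := fun T =>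
    intervalIntegral.integrableOn_deriv_of_nonneg (g := -W)
      (fun t ht => (hW t ht.1).continuousAt.neg.continuousWithinAt)
      (fun t ht => by simpa only [neg_neg] using (hW t ht.1.le).neg) (fun t ht => hF t ht.1.le)
  rw [integrableOn_Ici_iff_integrableOn_Ioi]
  refine integrableOn_Ioi_of_intervalIntegral_norm_bounded (W a - m) a hFint
    tendsto_id (eventually_ge_atTop a |>.mono fun T hT => ?_)
  have hint : ∫ t in a..T, F t = W a - W T := by
    have := intervalIntegral.integral_eq_sub_of_hasDerivAt (f := W) (f' := fun t => -F t)
      (fun t ht => hW t (by rw [uIcc_of_le hT] at ht; exact ht.1))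
      ((intervalIntegrable_iff_integrableOn_Ioc_of_le hT).2 (hFint T)).neg
    rw [intervalIntegral.integral_neg] at this
    linarith
  calc ∫ t in a..T, ‖F t‖ = ∫ t in a..T, F t :=
        intervalIntegral.integral_congr_ae (ae_of_all _ fun t ht =>
          Real.norm_of_nonneg (hF t (by rw [uIoc_of_le hT] at ht; exact ht.1.le)))
    _ ≤ W a - m := by linarith [hm T hT]

theorem HasGradientAt.comp_hasDerivAt {E : Type*} [NormedAddCommGroup E] [InnerProductSpace ℝ E]
    [CompleteSpace E] {Φ : E → ℝ} {g : E} {x : ℝ → E} {v : E} {t : ℝ}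
    (hΦ : HasGradientAt Φ g (x t)) (hx : HasDerivAt x v t) :
    HasDerivAt (fun s => Φ (x s)) (inner ℝ g v) t :=
  hΦ.hasFDerivAt.comp_hasDerivAt t hx

theorem ContDiff.gradient {E : Type*} [NormedAddCommGroup E] [InnerProductSpace ℝ E]
    [CompleteSpace E] {Φ : E → ℝ} {n : WithTop ℕ∞} (hΦ : ContDiff ℝ (n + 1) Φ) :
    ContDiff ℝ n (gradient Φ) :=
  (InnerProductSpace.toDual ℝ E).symm.contDiff.comp (hΦ.fderiv_right le_rfl)

theorem Integrable.of_mul_add_mul_of_nonneg {X : Type*} [MeasurableSpace X] {μ : Measure X}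
    {f g : X → ℝ} {a b : ℝ} (h : Integrable (fun t => a * f t + b * g t) μ) (ha : 0 < a)
    (hb : 0 ≤ b) (hf : AEStronglyMeasurable f μ) (hf0 : ∀ t, 0 ≤ f t) (hg0 : ∀ t, 0 ≤ g t) :
    Integrable f μ :=
  (h.const_mul a⁻¹).mono' hf <| ae_of_all _ fun t => by
    rw [Real.norm_of_nonneg (hf0 t), le_inv_mul_iff₀ ha]
    linarith [mul_nonneg hb (hg0 t)]

section DIN

variable {E : Type*} [NormedAddCommGroup E] [InnerProductSpace ℝ E] [CompleteSpace E]
  {Φ : E → ℝ} {α β : ℝ} {x x' x'' : ℝ → E} {t : ℝ}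

noncomputable def dinEnergy (Φ : E → ℝ) (α β : ℝ) (x x' : ℝ → E) (t : ℝ) : ℝ :=
  (α * β + 1) * Φ (x t) + ‖x' t + β • gradient Φ (x t)‖ ^ 2 / 2

theorem le_dinEnergy {C : ℝ} (hC : ∀ y, C ≤ Φ y) (hαβ : 0 ≤ α * β + 1) :
    (α * β + 1) * C ≤ dinEnergy Φ α β x x' t := by
  have hΦC := mul_le_mul_of_nonneg_left (hC (x t)) hαβ
  have hsq : 0 ≤ ‖x' t + β • gradient Φ (x t)‖ ^ 2 / 2 := by positivity
  unfold dinEnergy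
  linarith

theorem hasDerivAt_dinEnergy (hΦ : DifferentiableAt ℝ Φ (x t))
    (hgrad : DifferentiableAt ℝ (gradient Φ) (x t))
    (hx : HasDerivAt x (x' t) t) (hx' : HasDerivAt x' (x'' t) t)
    (heq : x'' t + α • x' t + β • fderiv ℝ (gradient Φ) (x t) (x' t) + gradient Φ (x t) = 0) :
    HasDerivAt (dinEnergy Φ α β x x') (-(α * ‖x' t‖ ^ 2 + β * ‖gradient Φ (x t)‖ ^ 2)) t := by
  have hΦx := hΦ.hasGradientAt.comp_hasDerivAt hx
  have hv : HasDerivAt (fun s => x' s + β • gradient Φ (x s))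
      (-(α • x' t + gradient Φ (x t))) t := by
    refine (hx'.add ((hgrad.hasFDerivAt.comp_hasDerivAt t hx).const_smul β)).congr_deriv ?_
    rw [eq_neg_iff_add_eq_zero, ← heq]
    abel
  refine ((hΦx.const_mul (α * β + 1)).add (hv.norm_sq.div_const 2)).congr_deriv ?_
  simp only [inner_neg_right, inner_add_left, inner_add_right, real_inner_smul_left,
    real_inner_smul_right, real_inner_self_eq_norm_sq, real_inner_comm (gradient Φ (x t)) (x' t)]
  ring

end DIN

theorem stmt_14 {n : ℕ} (Φ : EuclideanSpace ℝ (Fin n) → ℝ) (hΦ : ContDiff ℝ 2 Φ)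
    (hbdd : ∃ C : ℝ, ∀ y, C ≤ Φ y)
    (α β : ℝ) (hα : 0 < α) (hβ : 0 < β)
    (x x' x'' : ℝ → EuclideanSpace ℝ (Fin n))
    (hx : ∀ t : ℝ, HasDerivAt x (x' t) t)
    (hx' : ∀ t : ℝ, HasDerivAt x' (x'' t) t)
    (heq : ∀ t : ℝ, 0 ≤ t →
      x'' t + α • x' t + β • (fderiv ℝ (gradient Φ) (x t)) (x' t) + gradient Φ (x t) = 0) :
    IntegrableOn (fun t => ‖x' t‖ ^ 2) (Set.Ici (0 : ℝ)) ∧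
    IntegrableOn (fun t => ‖gradient Φ (x t)‖ ^ 2) (Set.Ici (0 : ℝ)) := by
  obtain ⟨C, hC⟩ := hbdd
  have hgrad : ContDiff ℝ 1 (gradient Φ) := hΦ.gradient
  have hdiss : IntegrableOn (fun t => α * ‖x' t‖ ^ 2 + β * ‖gradient Φ (x t)‖ ^ 2) (Ici 0) :=
    integrableOn_Ici_of_hasDerivAt_neg_of_bddBelow
      (fun t ht => hasDerivAt_dinEnergy (hΦ.differentiable two_ne_zero _)
        (hgrad.differentiable one_ne_zero _) (hx t) (hx' t) (heq t ht))
      (fun t _ => by positivity) (fun t _ => le_dinEnergy hC (by positivity))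
  have hxc : Continuous x := continuous_iff_continuousAt.2 fun t => (hx t).continuousAt
  have hx'c : Continuous x' := continuous_iff_continuousAt.2 fun t => (hx' t).continuousAt
  have hdiss' : IntegrableOn (fun t => β * ‖gradient Φ (x t)‖ ^ 2 + α * ‖x' t‖ ^ 2) (Ici 0) :=
    hdiss.congr_fun (fun t _ => add_comm _ _) measurableSet_Ici
  exact ⟨Integrable.of_mul_add_mul_of_nonneg hdiss hα hβ.le
      (hx'c.norm.pow 2).aestronglyMeasurable (fun t => by positivity) (fun t => by positivity),
    Integrable.of_mul_add_mul_of_nonneg hdiss' hβ hα.le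
      ((hgrad.continuous.comp hxc).norm.pow 2).aestronglyMeasurable (fun t => by positivity)
      (fun t => by positivity)⟩
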